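/- arXiv:cs/0702114 — 2 statements merged into one kernel-verified Lean document; each statement's English description precedes it below -/
import Mathlib

section
/- The number of vertices of LR^k(2^m) equals 2^m + k + 1 + 2k + Σ_{i=1}^{k} (2k − 2i + 1)·C(m−1, i). -/
open Finset

/-- `a` and `b` are `L`-neighbors: `a < b` and `L ∩ {a, …, b} = {a, b}`. -/
def LNbr (L : Set ℕ) (a b : ℕ) : Prop := a < b ∧ L ∩ Set.Icc a b = {a, b}

/-- The layers of the layered ring graph `LR^k(2^m)`:
`L^1 = {0, 1, 2, 4, …, 2^(m-1), 2^m}` and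
`L^(i+1) = {0} ∪ ⋃_{N^i(a,b)} {a + 2^t : 0 ≤ t ≤ log₂ (b - a)}`. -/
def Lset (m : ℕ) : ℕ → Set ℕ
  | 0 => ∅
  | 1 => {0} ∪ {x | ∃ t ≤ m, x = 2 ^ t}
  | i + 2 => {0} ∪ {x | ∃ a b, LNbr (Lset m (i + 1)) a b ∧
      ∃ t ≤ Nat.log 2 (b - a), x = a + 2 ^ t}

/-- The vertices of `LR^k(2^m)`, encoded as pairs `(i, t)`: `(0, t)` is the backbone
vertex `b_t` (for `t ≤ 2^m`), and `(i, t)` with `1 ≤ i ≤ k` is the layer vertex `ℓ^i_t`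
(for `t ∈ L^i`). The position of `(i, t)` is `t`. -/
def LRVertexSet (m k : ℕ) : Set (ℕ × ℕ) :=
  {v | (v.1 = 0 ∧ v.2 ≤ 2 ^ m) ∨ (1 ≤ v.1 ∧ v.1 ≤ k ∧ v.2 ∈ Lset m v.1)}

/-- The layered ring graph `LR^k(2^m)`: two distinct vertices are adjacent iff their
positions differ by at most `1` modulo `2^m + 1`. -/
def LRGraph (m k : ℕ) : SimpleGraph (LRVertexSet m k) :=
  SimpleGraph.fromRel
    (fun u v => (u.val.2 + 1) % (2 ^ m + 1) = v.val.2 % (2 ^ m + 1) ∨ u.val.2 = v.val.2)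

/-!
For `j ≥ 1` the layer `L^j` is the set of integers in `[0, 2^m]` with at most `j` ones in binary.
Consecutive elements `a < b` of that set differ by a power of two (`b = a + 1` if `a` has fewer
than `j` ones, otherwise `b` is obtained by carrying into the lowest one of `a`), so the points
`a + 2^t` with `2^t ≤ b - a` have at most one more binary one. Conversely, a nonzero number with
at most `j` ones is the right end of such a gap, and one with `j + 1` ones lies in the gap that
starts at the number obtained by deleting its lowest one. Counting the numbers below `2^m` through
their sets of binary digits gives `|L^j| = 1 + ∑_{t ≤ j} C(m, t)`, and the stated formula follows
by Pascal's rule.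
-/

namespace LayeredRing

def popcount (n : ℕ) : ℕ := n.bitIndices.length

@[simp] lemma popcount_zero : popcount 0 = 0 := by simp [popcount]

@[simp] lemma popcount_two_mul (n : ℕ) : popcount (2 * n) = popcount n := by simp [popcount]

@[simp] lemma popcount_two_mul_add_one (n : ℕ) : popcount (2 * n + 1) = popcount n + 1 := by
  simp [popcount]

@[simp] lemma popcount_two_pow_mul (k n : ℕ) : popcount (2 ^ k * n) = popcount n := by
  simp [popcount]

@[simp] lemma popcount_two_pow (k : ℕ) : popcount (2 ^ k) = 1 := by simp [popcount]

lemma popcount_pos {n : ℕ} : 0 < popcount n ↔ n ≠ 0 := by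
  refine ⟨?_, fun hn => List.length_pos_iff.2 fun h => hn ?_⟩
  · rintro h rfl
    simp at h
  · rw [← Nat.sum_map_two_pow_bitIndices n, h]
    rfl

lemma popcount_two_pow_mul_add (k q : ℕ) {r : ℕ} (hr : r < 2 ^ k) :
    popcount (2 ^ k * q + r) = popcount q + popcount r := by
  induction k generalizing r with
  | zero => simp_all
  | succ k ih =>
    obtain ⟨s, rfl | rfl⟩ := Nat.even_or_odd' r
    · rw [pow_succ', mul_assoc, ← mul_add, popcount_two_mul, ih (by omega), popcount_two_mul]
    · rw [pow_succ', mul_assoc, ← add_assoc, ← mul_add, popcount_two_mul_add_one,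
        ih (by omega), popcount_two_mul_add_one, add_assoc]

lemma popcount_succ_le (n : ℕ) : popcount (n + 1) ≤ popcount n + 1 := by
  induction n using Nat.strong_induction_on with
  | _ n ih =>
    obtain ⟨s, rfl | rfl⟩ := Nat.even_or_odd' n
    · simp
    · rw [show 2 * s + 1 + 1 = 2 * (s + 1) by ring, popcount_two_mul, popcount_two_mul_add_one]
      have := ih s (by omega)
      omega

lemma popcount_add_two_pow_le (n k : ℕ) : popcount (n + 2 ^ k) ≤ popcount n + 1 := by
  obtain ⟨q, r, hr, rfl⟩ : ∃ q r, r < 2 ^ k ∧ n = 2 ^ k * q + r :=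
    ⟨n / 2 ^ k, n % 2 ^ k, Nat.mod_lt n (Nat.two_pow_pos k), (Nat.div_add_mod n _).symm⟩
  rw [show 2 ^ k * q + r + 2 ^ k = 2 ^ k * (q + 1) + r by ring, popcount_two_pow_mul_add _ _ hr,
    popcount_two_pow_mul_add _ _ hr]
  have := popcount_succ_le q
  omega

lemma popcount_lt_add {k a e : ℕ} (ha : 2 ^ k ∣ a) (he0 : e ≠ 0) (he : e < 2 ^ k) :
    popcount a < popcount (a + e) := by
  obtain ⟨q, rfl⟩ := ha
  rw [popcount_two_pow_mul_add _ _ he, popcount_two_pow_mul]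
  have := popcount_pos.2 he0
  omega

lemma popcount_eq_card_bitIndices (n : ℕ) : popcount n = #n.bitIndices.toFinset :=
  (List.toFinset_card_of_nodup Nat.bitIndices_nodup).symm

lemma card_filter_powerset_card_le (m j : ℕ) :
    #{S ∈ (range m).powerset | #S ≤ j} = ∑ t ∈ range (j + 1), m.choose t := by
  rw [card_eq_sum_card_fiberwise (f := card) (t := range (j + 1))
    (fun S hS => mem_range.2 (Nat.lt_succ_of_le (mem_filter.1 hS).2))]
  refine sum_congr rfl fun t ht => ?_
  have htj := mem_range.1 ht
  calc #{S ∈ {S ∈ (range m).powerset | #S ≤ j} | #S = t}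
      = #(powersetCard t (range m)) := by
        rw [filter_filter, powersetCard_eq_filter]
        exact congrArg card (filter_congr fun S _ => ⟨And.right, fun h => ⟨by omega, h⟩⟩)
    _ = m.choose t := by simp

lemma card_filter_popcount_le (m j : ℕ) :
    #{x ∈ range (2 ^ m) | popcount x ≤ j} = ∑ t ∈ range (j + 1), m.choose t := by
  rw [← card_filter_powerset_card_le, ← card_image_of_injective _ (Finset.geomSum_injective le_rfl)]
  congr 1
  ext x
  simp only [mem_filter, mem_range, mem_image, mem_powerset]
  constructor
  · rintro ⟨hx, hpop⟩
    refine ⟨x.bitIndices.toFinset, ⟨fun i hi => ?_, ?_⟩, sum_toFinset_bitIndices_two_pow x⟩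
    · have := Nat.two_pow_le_of_mem_bitIndices (List.mem_toFinset.1 hi)
      exact mem_range.2 ((Nat.pow_lt_pow_iff_right one_lt_two).1 (by omega))
    · rwa [← popcount_eq_card_bitIndices]
  · rintro ⟨S, ⟨hS, hcard⟩, rfl⟩
    refine ⟨Nat.geomSum_lt le_rfl fun i hi => mem_range.1 (hS hi), ?_⟩
    rwa [popcount_eq_card_bitIndices, toFinset_bitIndices_sum_two_pow]

lemma add_le_of_dvd_of_lt {d a b : ℕ} (ha : d ∣ a) (hb : d ∣ b) (h : a < b) : a + d ≤ b := by
  obtain ⟨α, rfl⟩ := ha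
  obtain ⟨β, rfl⟩ := hb
  calc d * α + d = d * (α + 1) := by ring
    _ ≤ d * β := Nat.mul_le_mul_left d (Nat.lt_of_mul_lt_mul_left h)

section LNbr

variable {L : Set ℕ}

lemma lNbr_iff {a b : ℕ} : LNbr L a b ↔ a < b ∧ a ∈ L ∧ b ∈ L ∧ ∀ y ∈ L, a < y → b ≤ y := by
  constructor
  · rintro ⟨hab, hL⟩
    have hmem : ∀ y, y ∈ L ∩ Set.Icc a b ↔ y = a ∨ y = b := fun y => by rw [hL]; rfl
    refine ⟨hab, ((hmem a).2 (Or.inl rfl)).1, ((hmem b).2 (Or.inr rfl)).1, fun y hy hay => ?_⟩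
    by_contra! hyb
    rcases (hmem y).1 ⟨hy, hay.le, hyb.le⟩ with rfl | rfl <;> omega
  · rintro ⟨hab, ha, hb, hmin⟩
    refine ⟨hab, Set.Subset.antisymm ?_ ?_⟩
    · rintro y ⟨hy, hay, hyb⟩
      rcases hay.eq_or_lt with rfl | hay
      · exact Or.inl rfl
      · exact Or.inr (le_antisymm hyb (hmin y hy hay))
    · rintro y (rfl | rfl)
      exacts [⟨ha, le_rfl, hab.le⟩, ⟨hb, hab.le, le_rfl⟩]

lemma exists_lNbr_right {a c : ℕ} (ha : a ∈ L) (hc : c ∈ L) (hac : a < c) :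
    ∃ b, LNbr L a b := by
  classical
  have h : ∃ b, b ∈ L ∧ a < b := ⟨c, hc, hac⟩
  exact ⟨Nat.find h, lNbr_iff.2 ⟨(Nat.find_spec h).2, ha, (Nat.find_spec h).1,
    fun y hy hay => Nat.find_min' h ⟨hy, hay⟩⟩⟩

lemma exists_lNbr_left {a x : ℕ} (ha : a ∈ L) (hx : x ∈ L) (hax : a < x) :
    ∃ a', LNbr L a' x := by
  classical
  refine ⟨Nat.findGreatest (· ∈ L) (x - 1), lNbr_iff.2 ⟨?_, Nat.findGreatest_spec (m := a)
    (by omega) ha, hx, fun y hy hy' => ?_⟩⟩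
  · have := Nat.findGreatest_le (P := (· ∈ L)) (x - 1)
    omega
  · by_contra! hyx
    exact (Nat.le_findGreatest (by omega) hy).not_gt hy'

end LNbr

def lowWeight (m j : ℕ) : Set ℕ := {x | x ≤ 2 ^ m ∧ popcount x ≤ j}

def subdivide (L : Set ℕ) : Set ℕ :=
  {0} ∪ {x | ∃ a b, LNbr L a b ∧ ∃ t ≤ Nat.log 2 (b - a), x = a + 2 ^ t}

lemma Lset_add_two (m i : ℕ) : Lset m (i + 2) = subdivide (Lset m (i + 1)) := rfl

lemma zero_mem_lowWeight (m j : ℕ) : 0 ∈ lowWeight m j := ⟨Nat.zero_le _, by simp⟩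

lemma two_pow_mem_lowWeight {m j : ℕ} (hj : 1 ≤ j) : 2 ^ m ∈ lowWeight m j := ⟨le_rfl, by simpa⟩

lemma exists_eq_add_two_pow_of_lNbr {m p a b : ℕ} (hp : 1 ≤ p)
    (h : LNbr (lowWeight m p) a b) : ∃ g, b = a + 2 ^ g := by
  obtain ⟨hab, ⟨-, ha⟩, ⟨hbm, hb⟩, hmin⟩ := lNbr_iff.1 h
  rcases ha.lt_or_eq with hlt | heq
  · have := popcount_succ_le a
    exact ⟨0, le_antisymm (hmin (a + 1) ⟨by omega, by omega⟩ (by omega)) (by omega)⟩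
  -- `a` has exactly `p` ones, so the next element is reached by carrying into its lowest one
  obtain ⟨u, _, ⟨r, rfl⟩, rfl⟩ :=
    Nat.exists_eq_two_pow_mul_odd ((popcount_pos (n := a)).1 (by omega))
  have hpop : popcount r + 1 = p := by simpa using heq
  refine ⟨u, le_antisymm (hmin _ ⟨?_, ?_⟩ (Nat.lt_add_of_pos_right (Nat.two_pow_pos u))) ?_⟩
  · have hum : u ≤ m := by
      have : 2 ^ u < 2 ^ m := by nlinarith [Nat.two_pow_pos u]
      exact ((Nat.pow_lt_pow_iff_right one_lt_two).1 this).le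
    exact add_le_of_dvd_of_lt (dvd_mul_right _ _) (pow_dvd_pow 2 hum) (by omega)
  · rw [show 2 ^ u * (2 * r + 1) + 2 ^ u = 2 ^ (u + 1) * (r + 1) by ring, popcount_two_pow_mul]
    have := popcount_succ_le r
    omega
  · by_contra! hbu
    have := popcount_lt_add (dvd_mul_right (2 ^ u) (2 * r + 1))
      (e := b - 2 ^ u * (2 * r + 1)) (by omega) (by omega)
    rw [Nat.add_sub_cancel' hab.le] at this
    omega

lemma subdivide_lowWeight {m p : ℕ} (hp : 1 ≤ p) :
    subdivide (lowWeight m p) = lowWeight m (p + 1) := by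
  ext x
  constructor
  · rintro (rfl | ⟨a, b, hab, t, ht, rfl⟩)
    · exact zero_mem_lowWeight m _
    obtain ⟨hlt, ⟨-, ha⟩, ⟨hbm, -⟩, -⟩ := lNbr_iff.1 hab
    have h2t : 2 ^ t ≤ b - a := Nat.pow_le_of_le_log (by omega) ht
    have := popcount_add_two_pow_le a t
    exact ⟨by omega, by omega⟩
  rintro ⟨hxm, hx⟩
  rcases eq_or_ne x 0 with rfl | hx0
  · exact Or.inl rfl
  right
  rcases le_or_gt (popcount x) p with hxp | hxp
  · obtain ⟨a, hax⟩ :=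
      exists_lNbr_left (zero_mem_lowWeight m p) ⟨hxm, hxp⟩ (Nat.pos_of_ne_zero hx0)
    obtain ⟨g, rfl⟩ := exists_eq_add_two_pow_of_lNbr hp hax
    exact ⟨a, _, hax, g, by simp [Nat.log_pow one_lt_two], rfl⟩
  -- `x` has `p + 1` ones: drop its lowest one `2 ^ s` and cut the gap after what remains
  obtain ⟨s, _, ⟨r, rfl⟩, rfl⟩ := Nat.exists_eq_two_pow_mul_odd hx0
  have hsplit : 2 ^ s * (2 * r + 1) = 2 ^ (s + 1) * r + 2 ^ s := by ring
  have hpop : popcount (2 ^ (s + 1) * r) = p := by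
    simp only [popcount_two_pow_mul, popcount_two_mul_add_one] at hx hxp ⊢
    omega
  have hs := Nat.two_pow_pos s
  obtain ⟨b, hab⟩ := exists_lNbr_right (L := lowWeight m p) ⟨by omega, hpop.le⟩
    (two_pow_mem_lowWeight hp) (by omega)
  obtain ⟨hlt, -, ⟨-, hb⟩, -⟩ := lNbr_iff.1 hab
  refine ⟨_, b, hab, s, Nat.le_log_of_pow_le one_lt_two ?_, hsplit⟩
  by_contra! hbs
  have := popcount_lt_add (dvd_mul_right (2 ^ (s + 1)) r) (e := b - 2 ^ (s + 1) * r) (by omega)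
    (by have := Nat.pow_lt_pow_succ (a := 2) (n := s) one_lt_two; omega)
  rw [Nat.add_sub_cancel' hlt.le] at this
  omega

lemma Lset_one (m : ℕ) : Lset m 1 = lowWeight m 1 := by
  ext x
  simp only [Lset, lowWeight, Set.singleton_union, Set.mem_insert_iff, Set.mem_ofPred_eq]
  constructor
  · rintro (rfl | ⟨t, ht, rfl⟩)
    · exact zero_mem_lowWeight m 1
    · exact ⟨Nat.pow_le_pow_right two_pos ht, by simp⟩
  rintro ⟨hxm, hx⟩
  rcases eq_or_ne x 0 with rfl | hx0
  · exact Or.inl rfl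
  obtain ⟨s, _, ⟨r, rfl⟩, rfl⟩ := Nat.exists_eq_two_pow_mul_odd hx0
  obtain rfl : r = 0 := by
    by_contra hr
    have := popcount_pos.2 hr
    simp only [popcount_two_pow_mul, popcount_two_mul_add_one] at hx
    omega
  refine Or.inr ⟨s, ?_, by simp⟩
  exact (Nat.pow_le_pow_iff_right one_lt_two).1 (by simpa using hxm)

lemma Lset_eq_lowWeight (m : ℕ) {j : ℕ} (hj : 1 ≤ j) : Lset m j = lowWeight m j := by
  induction j, hj using Nat.le_induction with
  | base => exact Lset_one m
  | succ j hj ih =>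
    obtain ⟨i, rfl⟩ : ∃ i, j = i + 1 := ⟨j - 1, by omega⟩
    rw [Lset_add_two, ih, subdivide_lowWeight hj]

lemma LRVertexSet_eq (m k : ℕ) : LRVertexSet m k =
    ↑{v ∈ range (k + 1) ×ˢ range (2 ^ m + 1) | v.1 = 0 ∨ popcount v.2 ≤ v.1} := by
  ext ⟨i, t⟩
  simp only [LRVertexSet, Set.mem_ofPred_eq, coe_filter, mem_product, mem_range, Nat.lt_succ_iff]
  constructor
  · rintro (⟨rfl, ht⟩ | ⟨hi, hik, ht⟩)
    · exact ⟨⟨by omega, ht⟩, Or.inl rfl⟩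
    · rw [Lset_eq_lowWeight m hi] at ht
      exact ⟨⟨hik, ht.1⟩, Or.inr ht.2⟩
  · rintro ⟨⟨hik, ht⟩, rfl | hpop⟩
    · exact Or.inl ⟨rfl, ht⟩
    · rcases Nat.eq_zero_or_pos i with rfl | hi
      · exact Or.inl ⟨rfl, ht⟩
      · exact Or.inr ⟨hi, hik, (Lset_eq_lowWeight m hi).symm ▸ ⟨ht, hpop⟩⟩

lemma card_filter_popcount_le_succ (m j : ℕ) :
    #{x ∈ range (2 ^ m + 1) | popcount x ≤ j + 1} = ∑ t ∈ range (j + 2), m.choose t + 1 := by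
  rw [range_add_one, filter_insert, if_pos (by simp), card_insert_of_notMem (by simp),
    card_filter_popcount_le]

lemma ncard_LRVertexSet (m k : ℕ) : (LRVertexSet m k).ncard =
    2 ^ m + 1 + ∑ i ∈ range k, (∑ t ∈ range (i + 2), m.choose t + 1) := by
  rw [LRVertexSet_eq, Set.ncard_coe_finset, card_filter, sum_product, sum_range_succ']
  simp only [Nat.add_one_ne_zero, false_or, true_or, if_true, sum_boole, Nat.cast_id,
    card_filter_popcount_le_succ, sum_const, card_range, smul_eq_mul, mul_one]
  ring

lemma sum_range_choose_succ (n j : ℕ) :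
    ∑ t ∈ range (j + 2), (n + 1).choose t =
      2 * ∑ t ∈ range (j + 1), n.choose t + n.choose (j + 1) := by
  induction j with
  | zero =>
    simp only [zero_add, sum_range_succ, range_one, sum_singleton, Nat.choose_zero_right,
      Nat.choose_one_right, mul_one]
    ring
  | succ j ih =>
    rw [sum_range_succ, ih, Nat.choose_succ_succ, sum_range_succ _ (j + 1)]
    ring

lemma sum_sum_range_choose_succ (n k : ℕ) :
    ∑ i ∈ range k, ∑ t ∈ range (i + 2), (n + 1).choose t =
      2 * k + ∑ i ∈ Icc 1 k, (2 * k - 2 * i + 1) * n.choose i := by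
  induction k with
  | zero => simp
  | succ k ih =>
    have hpartial : ∑ t ∈ range (k + 1), n.choose t = 1 + ∑ i ∈ Icc 1 k, n.choose i := by
      rw [range_eq_Ico, sum_eq_sum_Ico_succ_bot (by omega), Nat.choose_zero_right]
      rfl
    have hcoeff : ∑ i ∈ Icc 1 k, (2 * (k + 1) - 2 * i + 1) * n.choose i =
        ∑ i ∈ Icc 1 k, (2 * k - 2 * i + 1) * n.choose i + 2 * ∑ i ∈ Icc 1 k, n.choose i := by
      rw [mul_sum, ← sum_add_distrib]
      refine sum_congr rfl fun i hi => ?_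
      rw [show 2 * (k + 1) - 2 * i + 1 = 2 * k - 2 * i + 1 + 2 by have := (mem_Icc.1 hi).2; omega]
      ring
    rw [sum_range_succ, ih, sum_range_choose_succ, sum_Icc_succ_top (by omega), hcoeff, hpartial]
    simp only [Nat.sub_self, zero_add, one_mul]
    ring

end LayeredRing

/-- The number of vertices of `LR^k(2^m)` equals
`2^m + k + 1 + 2k + ∑_{i=1}^{k} (2k - 2i + 1) * C(m-1, i)`. -/
theorem lr_vertex_count (m k : ℕ) (hm : 1 ≤ m) :
    (LRVertexSet m k).ncard =
      2 ^ m + k + 1 + 2 * k +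
        ∑ i ∈ Finset.Icc 1 k, (2 * k - 2 * i + 1) * Nat.choose (m - 1) i := by
  obtain ⟨n, rfl⟩ : ∃ n, m = n + 1 := ⟨m - 1, by omega⟩
  rw [LayeredRing.ncard_LRVertexSet, sum_add_distrib, LayeredRing.sum_sum_range_choose_succ,
    Nat.add_sub_cancel]
  simp only [sum_const, card_range, smul_eq_mul, mul_one]
  ring
end

section
/- Fix δ > 0. For each m let k = ⌊(m−1)/(2+δ)⌋. Then |V(LR^k(2^m))| / 2^m → 1 as m → ∞. -/
/-!
Apart from the `2^m + 1` backbone vertices, every vertex lies in a layer `L^i` with `i ≤ k`.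
A point of `L^(i+1)` has the form `a + 2^t ≤ b ≤ 2^m` with `a, b ∈ L^i`, so by induction the
points of `L^i` are at most `2^m` and have at most `i` ones in binary. The layers therefore
contribute at most `k · ∑_{j ≤ k} C(m+1, j)` vertices. Since `k ≤ a (m+1)` with
`a = 1/(2+δ) < 1/2`, the Chernoff bound `∑_{j ≤ a n} C(n, j) ≤ exp (n H(a))` and
`exp (H(a)) < 2` make this `o(2^m)`.
-/

open Finset Real Filter

def popcount (n : ℕ) : ℕ := n.bitIndices.length

@[simp] lemma popcount_zero : popcount 0 = 0 := by simp [popcount]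

@[simp] lemma popcount_two_pow (t : ℕ) : popcount (2 ^ t) = 1 := by simp [popcount]

@[simp] lemma popcount_two_mul (n : ℕ) : popcount (2 * n) = popcount n := by simp [popcount]

@[simp] lemma popcount_two_mul_add_one (n : ℕ) : popcount (2 * n + 1) = popcount n + 1 := by
  simp [popcount]

lemma popcount_succ_le (n : ℕ) : popcount (n + 1) ≤ popcount n + 1 := by
  induction n using Nat.evenOddRec with
  | h0 => simp [popcount]
  | h_even n _ => simp
  | h_odd n ih =>
    rw [show 2 * n + 1 + 1 = 2 * (n + 1) by ring, popcount_two_mul, popcount_two_mul_add_one]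
    omega

lemma popcount_add_two_pow_le (n t : ℕ) : popcount (n + 2 ^ t) ≤ popcount n + 1 := by
  induction t generalizing n with
  | zero => exact popcount_succ_le n
  | succ t ih =>
    obtain ⟨n, rfl | rfl⟩ := Nat.even_or_odd' n
    · rw [pow_succ', ← mul_add, popcount_two_mul, popcount_two_mul]
      exact ih n
    · rw [pow_succ', add_right_comm, ← mul_add, popcount_two_mul_add_one,
        popcount_two_mul_add_one]
      exact Nat.add_le_add_right (ih n) 1

lemma card_filter_popcount_le (n k : ℕ) :
    #{x ∈ range (2 ^ n) | popcount x ≤ k} ≤ ∑ j ∈ range (k + 1), n.choose j := by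
  calc #{x ∈ range (2 ^ n) | popcount x ≤ k}
      ≤ #((range (k + 1)).biUnion fun j => powersetCard j (range n)) := by
        refine card_le_card_of_injOn equivBitIndices (fun x hx => ?_)
          equivBitIndices.injective.injOn
        simp only [coe_filter, mem_range, Set.mem_ofPred_eq] at hx
        simp only [coe_biUnion, coe_range, Set.mem_Iio, mem_coe, mem_powersetCard,
          Set.mem_iUnion, equivBitIndices_apply, List.toFinset_card_of_nodup Nat.bitIndices_nodup]
        refine ⟨popcount x, Nat.lt_succ_of_le hx.2, fun i hi => ?_, rfl⟩
        rw [List.mem_toFinset] at hi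
        exact mem_range.2 <| (Nat.pow_lt_pow_iff_right (by norm_num)).1 <|
          (Nat.two_pow_le_of_mem_bitIndices hi).trans_lt hx.1
    _ ≤ ∑ j ∈ range (k + 1), #(powersetCard j (range n)) := card_biUnion_le
    _ = ∑ j ∈ range (k + 1), n.choose j := by simp

lemma LNbr.left_mem {L : Set ℕ} {a b : ℕ} (h : LNbr L a b) : a ∈ L :=
  (h.2.symm ▸ Set.mem_insert a {b} : a ∈ L ∩ Set.Icc a b).1

lemma LNbr.right_mem {L : Set ℕ} {a b : ℕ} (h : LNbr L a b) : b ∈ L :=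
  (h.2.symm ▸ Set.mem_insert_of_mem a rfl : b ∈ L ∩ Set.Icc a b).1

lemma lset_subset (m : ℕ) : ∀ i, Lset m i ⊆ {x | x ≤ 2 ^ m ∧ popcount x ≤ i}
  | 0 => by simp [Lset]
  | 1 => by
    rintro x (rfl | ⟨t, ht, rfl⟩)
    · simp
    · exact ⟨Nat.pow_le_pow_right two_pos ht, by simp⟩
  | i + 2 => by
    rintro x (rfl | ⟨a, b, hab, t, ht, rfl⟩)
    · simp
    obtain ⟨-, ha⟩ := lset_subset m (i + 1) hab.left_mem
    obtain ⟨hb, -⟩ := lset_subset m (i + 1) hab.right_mem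
    have h2t : 2 ^ t ≤ b - a :=
      (Nat.pow_le_pow_right two_pos ht).trans (Nat.pow_log_le_self 2 (Nat.sub_ne_zero_of_lt hab.1))
    have hab_lt := hab.1
    exact ⟨by omega, (popcount_add_two_pow_le a t).trans (by omega)⟩

lemma lrVertexSet_subset (m k : ℕ) :
    LRVertexSet m k ⊆
      ↑({0} ×ˢ Iic (2 ^ m) ∪ Icc 1 k ×ˢ {x ∈ range (2 ^ (m + 1)) | popcount x ≤ k}) := by
  rintro ⟨i, x⟩ (⟨rfl, hx⟩ | ⟨hi1, hik, hx⟩)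
  · simp [hx]
  · obtain ⟨hxm, hxi⟩ := lset_subset m i hx
    simp only [coe_union, coe_product, coe_filter, Set.mem_union, Set.mem_prod, mem_coe,
      mem_Icc, mem_range, Set.mem_ofPred_eq]
    exact Or.inr ⟨⟨hi1, hik⟩, hxm.trans_lt (Nat.pow_lt_pow_succ one_lt_two), hxi.trans hik⟩

lemma lrVertexSet_finite (m k : ℕ) : (LRVertexSet m k).Finite :=
  (finite_toSet _).subset (lrVertexSet_subset m k)

lemma two_pow_add_one_le_ncard_lrVertexSet (m k : ℕ) : 2 ^ m + 1 ≤ (LRVertexSet m k).ncard := by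
  have hsub : ↑({0} ×ˢ Iic (2 ^ m) : Finset (ℕ × ℕ)) ⊆ LRVertexSet m k := by
    rintro ⟨i, x⟩ hx
    simp only [coe_product, coe_singleton, coe_Iic, Set.mem_prod, Set.mem_singleton_iff,
      Set.mem_Iic] at hx
    exact Or.inl hx
  simpa only [Set.ncard_coe_finset, card_product, card_singleton, one_mul, Nat.card_Iic]
    using Set.ncard_le_ncard hsub (lrVertexSet_finite m k)

lemma ncard_lrVertexSet_le (m k : ℕ) :
    (LRVertexSet m k).ncard ≤ 2 ^ m + 1 + k * ∑ j ∈ range (k + 1), (m + 1).choose j := by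
  refine (Set.ncard_le_ncard (lrVertexSet_subset m k) (finite_toSet _)).trans ?_
  rw [Set.ncard_coe_finset]
  refine (card_union_le _ _).trans ?_
  simp only [card_product, card_singleton, one_mul, Nat.card_Iic, Nat.card_Icc,
    Nat.add_sub_cancel]
  gcongr
  exact card_filter_popcount_le (m + 1) k

lemma sum_range_choose_mul_le_one {n k : ℕ} {p : ℝ} (hk : k ≤ n) (hp0 : 0 ≤ p)
    (hp : p ≤ 1 / 2) :
    (∑ j ∈ range (k + 1), (n.choose j : ℝ)) * (p ^ k * (1 - p) ^ (n - k)) ≤ 1 := by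
  have h1p : 0 ≤ 1 - p := by linarith
  have hterm : ∀ j ≤ k, p ^ k * (1 - p) ^ (n - k) ≤ p ^ j * (1 - p) ^ (n - j) := by
    intro j hj
    calc p ^ k * (1 - p) ^ (n - k) = p ^ j * p ^ (k - j) * (1 - p) ^ (n - k) := by
          rw [← pow_add, Nat.add_sub_cancel' hj]
      _ ≤ p ^ j * (1 - p) ^ (k - j) * (1 - p) ^ (n - k) := by
          gcongr
          linarith
      _ = p ^ j * (1 - p) ^ (n - j) := by
          rw [mul_assoc, ← pow_add]; congr 2; omega
  calc (∑ j ∈ range (k + 1), (n.choose j : ℝ)) * (p ^ k * (1 - p) ^ (n - k))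
      ≤ ∑ j ∈ range (k + 1), p ^ j * (1 - p) ^ (n - j) * n.choose j := by
        rw [sum_mul]
        refine sum_le_sum fun j hj => ?_
        rw [mul_comm]
        exact mul_le_mul_of_nonneg_right (hterm j (Nat.lt_succ_iff.1 (mem_range.1 hj)))
          (Nat.cast_nonneg _)
    _ ≤ ∑ j ∈ range (n + 1), p ^ j * (1 - p) ^ (n - j) * n.choose j :=
        sum_le_sum_of_subset_of_nonneg (range_subset_range.2 (by omega))
          fun j _ _ => by positivity
    _ = 1 := by rw [← add_pow, add_sub_cancel, one_pow]

lemma sum_range_choose_le_exp_binEntropy_pow {n k : ℕ} {a : ℝ} (ha0 : 0 < a) (ha : a ≤ 1 / 2)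
    (hk : (k : ℝ) ≤ a * n) : ∑ j ∈ range (k + 1), (n.choose j : ℝ) ≤ exp (binEntropy a) ^ n := by
  have h1a : 0 < 1 - a := by linarith
  have hkn : k ≤ n := by
    have : a * n ≤ n := by nlinarith
    exact_mod_cast hk.trans this
  have hweight : 1 ≤ exp (binEntropy a) ^ n * (a ^ k * (1 - a) ^ (n - k)) := by
    have hexp : exp (binEntropy a) ^ n * (a ^ k * (1 - a) ^ (n - k)) =
        exp ((a * n - k) * (log (1 - a) - log a)) := by
      have hak : a ^ k = exp (k * log a) := by rw [exp_nat_mul, exp_log ha0]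
      have hak' : (1 - a) ^ (n - k) = exp ((n - k : ℕ) * log (1 - a)) := by
        rw [exp_nat_mul, exp_log h1a]
      rw [hak, hak', ← exp_nat_mul, ← exp_add, ← exp_add, Nat.cast_sub hkn, binEntropy,
        log_inv, log_inv]
      ring_nf
    rw [hexp]
    exact one_le_exp (mul_nonneg (by linarith) (sub_nonneg.2 (log_le_log ha0 (by linarith))))
  calc ∑ j ∈ range (k + 1), (n.choose j : ℝ)
      ≤ (∑ j ∈ range (k + 1), (n.choose j : ℝ)) *
          (exp (binEntropy a) ^ n * (a ^ k * (1 - a) ^ (n - k))) :=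
        le_mul_of_one_le_right (by positivity) hweight
    _ = exp (binEntropy a) ^ n *
          ((∑ j ∈ range (k + 1), (n.choose j : ℝ)) * (a ^ k * (1 - a) ^ (n - k))) := by ring
    _ ≤ exp (binEntropy a) ^ n :=
        mul_le_of_le_one_right (by positivity) (sum_range_choose_mul_le_one hkn ha0.le ha)

lemma tendsto_add_one_add_mul_pow_div_two_pow {ρ : ℝ} (hρ0 : 0 ≤ ρ) (hρ : ρ < 2) :
    Tendsto (fun m : ℕ => (2 ^ m + 1 + m * ρ ^ (m + 1)) / 2 ^ m) atTop (nhds 1) := by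
  have hsplit : (fun m : ℕ => (2 ^ m + 1 + m * ρ ^ (m + 1)) / 2 ^ m) =
      fun m : ℕ => 1 + (1 / 2) ^ m + ρ * (m * (ρ / 2) ^ m) := by
    ext m
    rw [div_pow, div_pow, one_pow]
    field_simp
    ring
  have hlim := (tendsto_const_nhds (x := (1 : ℝ))).add
    (tendsto_pow_atTop_nhds_zero_of_lt_one (by norm_num : (0 : ℝ) ≤ 1 / 2) (by norm_num))
    |>.add ((tendsto_self_mul_const_pow_of_lt_one (by positivity : 0 ≤ ρ / 2)
      (by linarith)).const_mul ρ)
  rw [hsplit]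
  simpa using hlim

/-- Fix `δ > 0` and for each `m` set `k = ⌊(m-1)/(2+δ)⌋`. Then
`|V(LR^k(2^m))| / 2^m → 1` as `m → ∞`. -/
theorem lr_vertex_count_asymptotic (δ : ℝ) (hδ : 0 < δ) :
    Filter.Tendsto
      (fun m : ℕ =>
        ((LRVertexSet m (Nat.floor (((m : ℝ) - 1) / (2 + δ)))).ncard : ℝ) / 2 ^ m)
      Filter.atTop (nhds 1) := by
  set a : ℝ := (2 + δ)⁻¹
  have ha0 : 0 < a := by positivity
  have ha : a < 1 / 2 := by rw [one_div]; exact inv_strictAnti₀ two_pos (by linarith)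
  have hρ : exp (binEntropy a) < 2 := by
    simpa [exp_log] using exp_lt_exp.2 (binEntropy_lt_log_two.2 (by rw [← one_div]; exact ha.ne))
  refine tendsto_of_tendsto_of_tendsto_of_le_of_le' tendsto_const_nhds
    (tendsto_add_one_add_mul_pow_div_two_pow (exp_pos _).le hρ) ?_ ?_
  · refine Eventually.of_forall fun m => (one_le_div (by positivity)).2 ?_
    exact_mod_cast (Nat.le_succ _).trans (two_pow_add_one_le_ncard_lrVertexSet m _)
  · filter_upwards [eventually_ge_atTop 1] with m hm
    set k := Nat.floor (((m : ℝ) - 1) / (2 + δ))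
    have hm1 : (1 : ℝ) ≤ m := by exact_mod_cast hm
    have hk : (k : ℝ) ≤ (m - 1) * a := Nat.floor_le (by positivity)
    have hkm : (k : ℝ) ≤ m := by nlinarith
    have hsum := sum_range_choose_le_exp_binEntropy_pow (n := m + 1) ha0 ha.le
      (k := k) (by push_cast; nlinarith)
    gcongr
    calc ((LRVertexSet m k).ncard : ℝ)
        ≤ 2 ^ m + 1 + k * ∑ j ∈ range (k + 1), ((m + 1).choose j : ℝ) := by
          exact_mod_cast ncard_lrVertexSet_le m k
      _ ≤ 2 ^ m + 1 + m * exp (binEntropy a) ^ (m + 1) := by gcongr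
end
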